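/- For every integer n ≥ 1, the independence number of the non-commuting graph Γ(U_{6n}) is α(Γ(U_{6n})) = 2n. -/

import Mathlib

/-- The inversion automorphism of `Multiplicative (ZMod 3)` (i.e. `b ↦ b⁻¹`). -/
def negAut : MulAut (Multiplicative (ZMod 3)) := MulEquiv.inv (Multiplicative (ZMod 3))

lemma negAut_sq : negAut * negAut = 1 := by
  ext x
  simp [negAut]

/-- The action of `ZMod (2*n)` on `Multiplicative (ZMod 3)`, where the generator acts
by inversion (negation). -/
def U6nAct (n : ℕ) : Multiplicative (ZMod (2 * n)) →* MulAut (Multiplicative (ZMod 3)) :=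
  AddMonoidHom.toMultiplicativeLeft
    (ZMod.lift (2 * n) ⟨zmultiplesHom _ (Additive.ofMul negAut), by
      show ((2 * n : ℕ) : ℤ) • Additive.ofMul negAut = 0
      have : negAut ^ (2 * n) = 1 := by
        rw [pow_mul, pow_two, negAut_sq, one_pow]
      rw [← zpow_natCast negAut, Nat.cast_mul] at this
      rw [show ((2 * n : ℕ) : ℤ) • Additive.ofMul negAut
            = Additive.ofMul (negAut ^ ((2 * n : ℕ) : ℤ)) from rfl]
      rw [Nat.cast_mul, this]; rfl⟩)

/-- The group `U_{6n} = ⟨a, b | a^(2n) = b³ = 1, a⁻¹ b a = b⁻¹⟩`, realized as the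
semidirect product `(ZMod 3) ⋊ (ZMod (2n))` where the generator of `ZMod (2n)` acts by
negation. -/
abbrev U6n (n : ℕ) := SemidirectProduct (Multiplicative (ZMod 3))
    (Multiplicative (ZMod (2 * n))) (U6nAct n)

/-- The generator `a` of `U_{6n}`, of order `2n`. -/
def Ua (n : ℕ) : U6n n := SemidirectProduct.inr (Multiplicative.ofAdd 1)

/-- The generator `b` of `U_{6n}`, of order `3`. -/
def Ub (n : ℕ) : U6n n := SemidirectProduct.inl (Multiplicative.ofAdd 1)

/-- The non-commuting graph of `U_{6n}`: vertices are the non-central elements, two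
distinct vertices are adjacent iff they do not commute. -/
def ncGraph (n : ℕ) : SimpleGraph {x : U6n n // x ∉ Subgroup.center (U6n n)} where
  Adj u v := u.val * v.val ≠ v.val * u.val
  symm := ⟨fun _ _ h => fun e => h e.symm⟩
  loopless := ⟨fun _ h => h rfl⟩

/-!
The elements `bⁱa²ʲ` form an abelian subgroup `A` of index 2 containing the centre
`Z = {a²ʲ}`, which has order `n`; hence `A \ Z` is an independent set of size `3n - n = 2n`.
Conversely, an independent set `S` is a set of commuting non-central elements, so `S ∪ Z` lies in
the centralizer of any `g ∈ S`. That centralizer is a proper subgroup, so `|S| + n ≤ 6n / 2`.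
-/

open Subgroup

theorem MonoidHom.card_ker_mul_card_of_surjective {G G' : Type*} [Group G] [Group G']
    {f : G →* G'} (hf : Function.Surjective f) : Nat.card f.ker * Nat.card G' = Nat.card G := by
  rw [← card_mul_index f.ker, index_ker, MonoidHom.range_eq_top.mpr hf, card_top]

namespace Subgroup

variable {G : Type*} [Group G] [Finite G]

theorem card_centralizer_mul_two_le {g : G} (hg : g ∉ center G) :
    Nat.card (centralizer {g}) * 2 ≤ Nat.card G := by
  have hne : centralizer {g} ≠ ⊤ := fun h => hg (centralizer_eq_top_iff_subset.mp h rfl)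
  rw [← card_mul_index (centralizer {g})]
  exact Nat.mul_le_mul_left _ (one_lt_index_of_ne_top hne)

theorem ncard_add_card_center_mul_two_le {S : Set G} (hS : S.Pairwise Commute)
    (hSZ : ∀ g ∈ S, g ∉ center G) (hG : center G ≠ ⊤) :
    (S.ncard + Nat.card (center G)) * 2 ≤ Nat.card G := by
  obtain ⟨u, hu, hSu⟩ : ∃ u ∉ center G, S ⊆ centralizer {u} := by
    rcases S.eq_empty_or_nonempty with rfl | ⟨u, huS⟩
    · obtain ⟨u, -, hu⟩ := SetLike.exists_of_lt (lt_top_iff_ne_top.mpr hG)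
      exact ⟨u, hu, Set.empty_subset _⟩
    · refine ⟨u, hSZ u huS, fun v hv => mem_centralizer_singleton_iff.mpr ?_⟩
      rcases eq_or_ne v u with rfl | hvu
      · rfl
      · exact (hS hv huS hvu).eq
  have hsub : S ∪ center G ⊆ centralizer {u} := Set.union_subset hSu (center_le_centralizer _)
  calc (S.ncard + Nat.card (center G)) * 2
      = (S ∪ center G).ncard * 2 := by
        rw [Set.ncard_union_eq (Set.disjoint_left.mpr hSZ), ← Nat.card_coe_set_eq (center G : Set G),
          SetLike.coe_sort_coe]
    _ ≤ (centralizer {u} : Set G).ncard * 2 := Nat.mul_le_mul_right 2 (Set.ncard_le_ncard hsub)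
    _ = Nat.card (centralizer {u}) * 2 := by rw [← Nat.card_coe_set_eq, SetLike.coe_sort_coe]
    _ ≤ Nat.card G := card_centralizer_mul_two_le hu

theorem ncard_preimage_val_add_card_center {A : Subgroup G} (hA : center G ≤ A) :
    (Subtype.val ⁻¹' (A : Set G) : Set {g : G // g ∉ center G}).ncard + Nat.card (center G)
      = Nat.card A := by
  have himage : Subtype.val '' (Subtype.val ⁻¹' (A : Set G) : Set {g : G // g ∉ center G})
      = (A : Set G) \ center G := by
    ext g; simp [and_comm]
  rw [← Set.ncard_image_of_injective _ Subtype.val_injective, himage,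
    ← SetLike.coe_sort_coe, ← SetLike.coe_sort_coe A, Nat.card_coe_set_eq, Nat.card_coe_set_eq,
    Set.ncard_sdiff_add_ncard_of_subset hA]

end Subgroup

theorem card_multiplicative_zmod (m : ℕ) : Nat.card (Multiplicative (ZMod m)) = m :=
  Nat.card_zmod m

theorem negAut_pow_apply (k : ℕ) (y : Multiplicative (ZMod 3)) :
    (negAut ^ k) y = if Even k then y else y⁻¹ := by
  induction k with
  | zero => simp
  | succ k ih =>
    rw [pow_succ', MulAut.mul_apply, ih]
    simp only [Nat.even_add_one]
    split_ifs <;> simp [negAut]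

namespace U6n

variable (n : ℕ)

theorem card_eq : Nat.card (U6n n) = 6 * n := by
  rw [SemidirectProduct.card, card_multiplicative_zmod, card_multiplicative_zmod]
  ring

def parity : Multiplicative (ZMod (2 * n)) →* Multiplicative (ZMod 2) :=
  (ZMod.castHom (dvd_mul_right 2 n) (ZMod 2)).toAddMonoidHom.toMultiplicative

theorem parity_surjective : Function.Surjective (parity n) :=
  ZMod.castHom_surjective (dvd_mul_right 2 n)

theorem parity_ofAdd_natCast_eq_one_iff (k : ℕ) :
    parity n (Multiplicative.ofAdd (k : ZMod (2 * n))) = 1 ↔ Even k := by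
  simp [parity, ZMod.natCast_eq_zero_iff_even]

theorem parity_ofAdd_one_ne_one : parity n (Multiplicative.ofAdd 1) ≠ 1 := by
  simpa using (parity_ofAdd_natCast_eq_one_iff n 1).not

theorem card_ker_parity : Nat.card (parity n).ker = n := by
  have h := MonoidHom.card_ker_mul_card_of_surjective (parity_surjective n)
  rw [card_multiplicative_zmod, card_multiplicative_zmod] at h
  omega

def evenSubgroup : Subgroup (U6n n) := ((parity n).comp SemidirectProduct.rightHom).ker

theorem mem_evenSubgroup {g : U6n n} : g ∈ evenSubgroup n ↔ parity n g.right = 1 := Iff.rfl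

theorem card_evenSubgroup : Nat.card (evenSubgroup n) = 3 * n := by
  have h := MonoidHom.card_ker_mul_card_of_surjective
    (f := (parity n).comp (SemidirectProduct.rightHom : U6n n →* _))
    ((parity_surjective n).comp SemidirectProduct.rightHom_surjective)
  rw [card_multiplicative_zmod, card_eq] at h
  change Nat.card (evenSubgroup n) * 2 = 6 * n at h
  omega

variable [NeZero n]

instance : Finite (U6n n) := Finite.of_equiv _ SemidirectProduct.equivProd.symm

theorem act_apply (t : Multiplicative (ZMod (2 * n))) (y : Multiplicative (ZMod 3)) :
    U6nAct n t y = if parity n t = 1 then y else y⁻¹ := by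
  obtain ⟨k, rfl⟩ : ∃ k : ℕ, Multiplicative.ofAdd (k : ZMod (2 * n)) = t :=
    ⟨(Multiplicative.toAdd t).val, by simp⟩
  have hk : U6nAct n (Multiplicative.ofAdd (k : ZMod (2 * n))) = negAut ^ k := by
    rw [← Int.cast_natCast, ← zpow_natCast]
    simp only [U6nAct, AddMonoidHom.coe_toMultiplicativeLeft, Function.comp_apply, toAdd_ofAdd,
      ZMod.lift_coe]
    rfl
  simp only [hk, negAut_pow_apply, parity_ofAdd_natCast_eq_one_iff]

theorem mem_center_iff {g : U6n n} :
    g ∈ center (U6n n) ↔ g.left = 1 ∧ parity n g.right = 1 := by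
  constructor
  · intro hg
    have ha := congrArg SemidirectProduct.left (Subgroup.mem_center_iff.mp hg (Ua n))
    have hb := congrArg SemidirectProduct.left (Subgroup.mem_center_iff.mp hg (Ub n))
    simp only [Ua, Ub, SemidirectProduct.mul_left, SemidirectProduct.left_inr,
      SemidirectProduct.right_inr, SemidirectProduct.left_inl, SemidirectProduct.right_inl,
      act_apply, if_neg (parity_ofAdd_one_ne_one n), one_mul, map_one, MulAut.one_apply,
      mul_one] at ha hb
    have hleft : g.left = 1 := (by decide : ∀ x : Multiplicative (ZMod 3), x⁻¹ = x → x = 1) _ ha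
    refine ⟨hleft, ?_⟩
    by_contra hodd
    rw [hleft, if_neg hodd] at hb
    exact absurd hb (by decide)
  · rintro ⟨hleft, heven⟩
    refine Subgroup.mem_center_iff.mpr fun h => SemidirectProduct.ext ?_ ?_
    · simp [act_apply, hleft, heven]
    · simp [mul_comm]

theorem center_eq_map_ker_parity :
    center (U6n n) = (parity n).ker.map SemidirectProduct.inr := by
  ext g
  rw [mem_center_iff, mem_map]
  constructor
  · rintro ⟨hleft, heven⟩
    exact ⟨g.right, heven, SemidirectProduct.ext (by simp [hleft]) rfl⟩
  · rintro ⟨t, ht, rfl⟩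
    exact ⟨rfl, ht⟩

theorem card_center : Nat.card (center (U6n n)) = n := by
  rw [center_eq_map_ker_parity, card_map_of_injective SemidirectProduct.inr_injective,
    card_ker_parity]

theorem center_ne_top : center (U6n n) ≠ ⊤ := fun h =>
  parity_ofAdd_one_ne_one n ((mem_center_iff n).mp (h ▸ mem_top (Ua n))).2

theorem center_le_evenSubgroup : center (U6n n) ≤ evenSubgroup n :=
  fun _ hg => ((mem_center_iff n).mp hg).2

theorem commute_of_mem_evenSubgroup {g h : U6n n} (hg : g ∈ evenSubgroup n)
    (hh : h ∈ evenSubgroup n) : Commute g h := by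
  rw [mem_evenSubgroup] at hg hh
  exact SemidirectProduct.ext (by simp [act_apply, hg, hh, mul_comm]) (by simp [mul_comm])

end U6n

/-- The independence number of the non-commuting graph of `U_{6n}` is `2n`: there is an
independent set of size `2n`, and every independent set has size at most `2n`. -/
theorem U6n_indep_number (n : ℕ) (hn : 1 ≤ n) :
    IsGreatest {k | ∃ S : Set {x : U6n n // x ∉ Subgroup.center (U6n n)},
      S.Pairwise (fun u v => ¬ (ncGraph n).Adj u v) ∧ S.ncard = k} (2 * n) := by
  have : NeZero n := ⟨by omega⟩
  constructor
  · refine ⟨Subtype.val ⁻¹' (U6n.evenSubgroup n : Set (U6n n)), ?_, ?_⟩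
    · exact fun u hu v hv _ => not_not.mpr (U6n.commute_of_mem_evenSubgroup n hu hv).eq
    · have h := ncard_preimage_val_add_card_center (U6n.center_le_evenSubgroup n)
      rw [U6n.card_center, U6n.card_evenSubgroup] at h
      omega
  · rintro k ⟨S, hS, rfl⟩
    have hcomm : (Subtype.val '' S).Pairwise Commute :=
      Subtype.val_injective.injOn.pairwise_image.mpr fun u hu v hv huv => not_not.mp (hS hu hv huv)
    have h := ncard_add_card_center_mul_two_le hcomm (by rintro _ ⟨u, -, rfl⟩; exact u.2)
      (U6n.center_ne_top n)
    rw [Set.ncard_image_of_injective _ Subtype.val_injective, U6n.card_center, U6n.card_eq] at h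
    omega
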